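/- arXiv:math/0207285 — 2 statements merged into one kernel-verified Lean document; each statement's English description precedes it below -/
import Mathlib

section
/- For each dimension d ≥ 1, let Q_d = (−1/2, 1/2)^d be the open unit cube in ℝ^d centered at zero with sides parallel to the axes, and let c_d denote the best constant in the weak type (1,1) inequality for the centered Hardy–Littlewood maximal operator M_{d,Q_d}. Then c_d ≤ c_{d+1} for every d ≥ 1. -/
open MeasureTheory Set
open scoped ENNReal

/-- The open unit cube `Q_d = (-1/2, 1/2)^d` in `ℝ^d`, centered at zero with sides parallel
to the axes. -/
def unitCube (d : ℕ) : Set (Fin d → ℝ) :=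
  Set.univ.pi fun _ : Fin d => Set.Ioo (-(1/2) : ℝ) (1/2)

/-- The centered Hardy–Littlewood maximal operator on `ℝ^d` associated to a "ball" `B`:
`M_{d,B} f (x) = sup_{r>0} (1/(r^d λ^d(B))) ∫_{x + rB} |f|`. -/
noncomputable def maxOp (d : ℕ) (B : Set (Fin d → ℝ)) (f : (Fin d → ℝ) → ℝ)
    (x : Fin d → ℝ) : ℝ≥0∞ :=
  ⨆ (r : ℝ) (_ : 0 < r),
    (∫⁻ y in (fun b => x + r • b) '' B, ENNReal.ofReal |f y| ∂volume) /
      (ENNReal.ofReal (r ^ d) * volume B)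

/-- The best constant in the weak type `(1,1)` inequality for `maxOp d B`. -/
noncomputable def bestConst (d : ℕ) (B : Set (Fin d → ℝ)) : ℝ :=
  sInf {c : ℝ | 0 < c ∧ ∀ f : (Fin d → ℝ) → ℝ, Integrable f volume → ∀ α : ℝ, 0 < α →
    ENNReal.ofReal α * volume {x | ENNReal.ofReal α < maxOp d B f x} ≤
      ENNReal.ofReal (c * ∫ x, |f x|)}

/-!
Extend `f` on `ℝ^d` to `g(t, x) = 1_{|t| < h} f(x)` on `ℝ × ℝ^d`. Cubes are sup-norm balls, so at
points `(t, x)` with `|t| < h - R` the cube averages of `g` of radius at most `R` are exactly those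
of `f` at `x`. The weak-type inequality for `g`, whose `L¹` norm is `2h ‖f‖₁`, applied on this slab
gives `α (2h - 2R) |{M_R f > α}| ≤ c · 2h ‖f‖₁` for the maximal operator `M_R` truncated at radius
`R`; letting `h → ∞` and then `R → ∞`, every admissible constant in dimension `d + 1` is
admissible in dimension `d`. Since `sInf ∅ = 0`, one also needs an admissible constant in
dimension `d + 1`: the Vitali covering lemma gives `4 ^ (d + 1)`.
-/

open Metric Module
open scoped Pointwise

theorem image_affine_ball {E : Type*} [SeminormedAddCommGroup E] [NormedSpace ℝ E]
    (x : E) {r : ℝ} (hr : 0 < r) (ρ : ℝ) :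
    (fun b => x + r • b) '' ball (0 : E) ρ = ball x (r * ρ) := by
  have : (fun b => x + r • b) '' ball (0 : E) ρ = x +ᵥ r • ball (0 : E) ρ := by
    rw [← image_smul, ← image_vadd, image_image]; rfl
  rw [this, _root_.smul_ball hr.ne', vadd_ball, smul_zero, vadd_eq_add, add_zero,
    Real.norm_of_nonneg hr.le]

theorem le_of_forall_pos_mul_le_mul_add {a b k : ℝ} (h : ∀ t > 0, a * t ≤ b * (t + k)) :
    a ≤ b := by
  by_contra! hba
  have hδ : 0 < a - b := sub_pos.2 hba
  set t := (|b * k| + 1) / (a - b)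
  have ht : (a - b) * t = |b * k| + 1 := mul_div_cancel₀ _ hδ.ne'
  have := h t (by positivity)
  nlinarith [le_abs_self (b * k)]

theorem ENNReal.le_ofReal_of_forall_pos_mul_le {a : ℝ≥0∞} {b k : ℝ} (hb : 0 ≤ b) (hk : 0 ≤ k)
    (h : ∀ t > 0, a * ENNReal.ofReal t ≤ ENNReal.ofReal (b * (t + k))) :
    a ≤ ENNReal.ofReal b := by
  have ha : a ≠ ∞ := by
    have h1 := h 1 one_pos
    rw [ENNReal.ofReal_one, mul_one] at h1
    exact ne_top_of_le_ne_top ENNReal.ofReal_ne_top h1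
  rw [← ENNReal.ofReal_toReal ha]
  refine ENNReal.ofReal_le_ofReal (le_of_forall_pos_mul_le_mul_add (k := k) fun t ht => ?_)
  have := h t ht
  rwa [← ENNReal.ofReal_toReal ha, ← ENNReal.ofReal_mul ENNReal.toReal_nonneg,
    ENNReal.ofReal_le_ofReal_iff (by positivity)] at this

theorem mul_measure_setOf_exists_pos_le {X : Type*} [MeasurableSpace X] (μ : Measure X)
    (P : X → ℝ → Prop) {a C : ℝ≥0∞}
    (h : ∀ n : ℕ, a * μ {x | ∃ s ∈ Ioc 0 (n : ℝ), P x s} ≤ C) :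
    a * μ {x | ∃ s > 0, P x s} ≤ C := by
  have hunion : {x | ∃ s > 0, P x s} = ⋃ n : ℕ, {x | ∃ s ∈ Ioc 0 (n : ℝ), P x s} := by
    ext x
    simp only [mem_iUnion, mem_ofPred_eq, mem_Ioc]
    constructor
    · rintro ⟨s, hs, hP⟩
      obtain ⟨n, hn⟩ := exists_nat_ge s
      exact ⟨n, s, ⟨hs, hn⟩, hP⟩
    · rintro ⟨n, s, hs, hP⟩
      exact ⟨s, hs.1, hP⟩
  have hmono : Monotone fun n : ℕ => {x | ∃ s ∈ Ioc 0 (n : ℝ), P x s} :=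
    fun m n hmn x ⟨s, hs, hP⟩ => ⟨s, Ioc_subset_Ioc_right (Nat.cast_le.2 hmn) hs, hP⟩
  rw [hunion, hmono.measure_iUnion, ENNReal.mul_iSup]
  exact iSup_le h

theorem mul_measure_setOf_lt_setLAverage_ball_le {E : Type*} [NormedAddCommGroup E]
    [NormedSpace ℝ E] [MeasurableSpace E] [BorelSpace E] [FiniteDimensional ℝ E]
    (μ : Measure E) [μ.IsAddHaarMeasure] (g : E → ℝ≥0∞) (a : ℝ≥0∞) (R : ℝ) :
    a * μ {x | ∃ s ∈ Ioc 0 R, a < ⨍⁻ y in ball x s, g y ∂μ} ≤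
      4 ^ finrank ℝ E * ∫⁻ y, g y ∂μ := by
  set t := {p : E × ℝ | p.2 ∈ Ioc 0 R ∧ a * μ (ball p.1 p.2) ≤ ∫⁻ y in ball p.1 p.2, g y ∂μ}
  -- capping the radii at `R` is what lets the Vitali covering lemma apply
  obtain ⟨u, hut, hdisj, hcov⟩ := Vitali.exists_disjoint_subfamily_covering_enlargement_closedBall
    t Prod.fst Prod.snd R (fun p hp => hp.1.2) 4 (by norm_num)
  have hdisj' : u.PairwiseDisjoint fun p => ball p.1 p.2 :=
    hdisj.mono fun _ => ball_subset_closedBall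
  have hu : u.Countable := hdisj'.countable_of_isOpen (fun _ _ => isOpen_ball)
    fun p hp => nonempty_ball.2 (hut hp).1.1
  have : Countable u := hu.to_subtype
  have hcover : {x | ∃ s ∈ Ioc 0 R, a < ⨍⁻ y in ball x s, g y ∂μ} ⊆
      ⋃ p ∈ u, closedBall p.1 (4 * p.2) := by
    rintro x ⟨s, hs, hlt⟩
    have hxs : (x, s) ∈ t := ⟨hs, ENNReal.mul_le_of_le_div (setLAverage_eq μ g _ ▸ hlt.le)⟩
    obtain ⟨p, hp, hsub⟩ := hcov _ hxs
    exact mem_biUnion hp (hsub (mem_closedBall_self hs.1.le))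
  have hvol : ∀ p ∈ u, μ (closedBall p.1 (4 * p.2)) = 4 ^ finrank ℝ E * μ (ball p.1 p.2) := by
    intro p hp
    rw [Measure.addHaar_closedBall μ _ (by linarith [(hut hp).1.1]),
      Measure.addHaar_ball_of_pos μ _ (hut hp).1.1, mul_pow, ENNReal.ofReal_mul (by positivity), ENNReal.ofReal_pow (by norm_num), mul_assoc,
      ENNReal.ofReal_ofNat]
  calc a * μ {x | ∃ s ∈ Ioc 0 R, a < ⨍⁻ y in ball x s, g y ∂μ}
      ≤ a * ∑' p : u, μ (closedBall p.1.1 (4 * p.1.2)) := by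
        gcongr; exact (measure_mono hcover).trans (measure_biUnion_le μ hu _)
    _ = 4 ^ finrank ℝ E * ∑' p : u, a * μ (ball p.1.1 p.1.2) := by
        rw [tsum_congr fun p : u => hvol p p.2, ENNReal.tsum_mul_left, ENNReal.tsum_mul_left]
        exact mul_left_comm _ _ _
    _ ≤ 4 ^ finrank ℝ E * ∑' p : u, ∫⁻ y in ball p.1.1 p.1.2, g y ∂μ := by
        gcongr with p; exact (hut p.2).2
    _ = 4 ^ finrank ℝ E * ∫⁻ y in ⋃ p : u, ball p.1.1 p.1.2, g y ∂μ := by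
        rw [lintegral_iUnion (s := fun p : u => ball p.1.1 p.1.2) (fun _ => measurableSet_ball)
          fun p q hpq => hdisj' p.2 q.2 (Subtype.coe_ne_coe.2 hpq)]
    _ ≤ 4 ^ finrank ℝ E * ∫⁻ y, g y ∂μ := by gcongr; exact Measure.restrict_le_self

theorem ball_eq_preimage_piFinSuccAbove {X : Type*} [PseudoMetricSpace X] [MeasurableSpace X]
    {n : ℕ} (i : Fin (n + 1)) (y : Fin (n + 1) → X) {s : ℝ} (hs : 0 < s) :
    ball y s = MeasurableEquiv.piFinSuccAbove (fun _ => X) i ⁻¹'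
      (ball (y i) s ×ˢ ball (i.removeNth y) s) := by
  ext z
  simp only [mem_preimage, MeasurableEquiv.piFinSuccAbove_apply, Fin.insertNthEquiv_symm_apply,
    mem_prod, mem_ball, dist_pi_lt_iff hs, Fin.removeNth]
  exact Fin.forall_iff_succAbove i

theorem MeasureTheory.MeasurePreserving.setLAverage_comp_preimage {α β : Type*}
    [MeasurableSpace α] [MeasurableSpace β] {μ : Measure α} {ν : Measure β} {e : α ≃ᵐ β}
    (he : MeasurePreserving e μ ν) (f : β → ℝ≥0∞) (s : Set β) :
    ⨍⁻ x in e ⁻¹' s, f (e x) ∂μ = ⨍⁻ y in s, f y ∂ν := by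
  rw [setLAverage_eq, setLAverage_eq, he.setLIntegral_comp_preimage_emb e.measurableEmbedding,
    he.measure_preimage_equiv]

theorem setLAverage_prod_snd {α β : Type*} [MeasurableSpace α] [MeasurableSpace β]
    {μ : Measure α} {ν : Measure β} [SFinite μ] [SFinite ν] {s : Set α} {t : Set β}
    (hs₀ : μ s ≠ 0) (hs : μ s ≠ ∞) {f : β → ℝ≥0∞} (hf : AEMeasurable f (ν.restrict t)) :
    ⨍⁻ p in s ×ˢ t, f p.2 ∂μ.prod ν = ⨍⁻ y in t, f y ∂ν := by
  have hint : ∫⁻ p in s ×ˢ t, f p.2 ∂μ.prod ν = μ s * ∫⁻ y in t, f y ∂ν := by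
    simpa [Measure.prod_restrict] using
      lintegral_prod_mul (aemeasurable_const (b := (1 : ℝ≥0∞)) (μ := μ.restrict s)) hf
  rw [setLAverage_eq, setLAverage_eq, hint, Measure.prod_prod, ENNReal.mul_div_mul_left _ _ hs₀ hs]

theorem unitCube_eq_ball (d : ℕ) : unitCube d = ball 0 (1 / 2) := by
  rw [ball_pi _ one_half_pos, unitCube]
  simp [Real.ball_eq_Ioo]

theorem maxOp_unitCube (d : ℕ) (f : (Fin d → ℝ) → ℝ) (x : Fin d → ℝ) :
    maxOp d (unitCube d) f x =
      ⨆ (r : ℝ) (_ : 0 < r), ⨍⁻ y in ball x (r / 2), ENNReal.ofReal |f y| ∂volume := by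
  refine iSup_congr fun r => iSup_congr fun hr => ?_
  have hvol : ∀ (z : Fin d → ℝ) ρ, 0 < ρ → volume (ball z ρ) = ENNReal.ofReal ((2 * ρ) ^ d) :=
    fun z ρ hρ => by simp [Real.volume_pi_ball z hρ]
  rw [unitCube_eq_ball, image_affine_ball x hr, setLAverage_eq, hvol 0 _ one_half_pos,
    hvol x _ (half_pos hr), mul_one_div, mul_div_cancel₀ r two_ne_zero,
    mul_one_div_cancel two_ne_zero, one_pow, ENNReal.ofReal_one, mul_one]

theorem setOf_lt_maxOp_unitCube (d : ℕ) (f : (Fin d → ℝ) → ℝ) (a : ℝ≥0∞) :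
    {x | a < maxOp d (unitCube d) f x} =
      {x | ∃ s > 0, a < ⨍⁻ y in ball x s, ENNReal.ofReal |f y| ∂volume} := by
  ext x
  simp only [mem_ofPred_eq, maxOp_unitCube, lt_iSup_iff]
  constructor
  · rintro ⟨r, hr, h⟩; exact ⟨r / 2, half_pos hr, h⟩
  · rintro ⟨s, hs, h⟩; exact ⟨2 * s, by positivity, by rwa [mul_div_cancel_left₀ s two_ne_zero]⟩

noncomputable def slabExtension {d : ℕ} (f : (Fin d → ℝ) → ℝ) (h : ℝ) (y : Fin (d + 1) → ℝ) : ℝ :=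
  (ball (0 : ℝ) h).indicator 1 (y 0) * f (Fin.tail y)

section SlabExtension

variable {d : ℕ} {f : (Fin d → ℝ) → ℝ} {h : ℝ}

local notation "e" => MeasurableEquiv.piFinSuccAbove (fun _ : Fin (d + 1) => ℝ) 0

theorem slabExtension_eq_comp (f : (Fin d → ℝ) → ℝ) (h : ℝ) :
    slabExtension f h =
      (fun p : ℝ × (Fin d → ℝ) => (ball (0 : ℝ) h).indicator 1 p.1 * f p.2) ∘ e := by
  ext y
  simp [slabExtension, MeasurableEquiv.piFinSuccAbove_apply]

theorem integrable_slabExtension (hf : Integrable f) (h : ℝ) : Integrable (slabExtension f h) := by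
  rw [slabExtension_eq_comp]
  refine ((volume_preserving_piFinSuccAbove (fun _ : Fin (d + 1) => ℝ) 0).integrable_comp_emb
    (MeasurableEquiv.measurableEmbedding _)).2 ?_
  rw [Measure.volume_eq_prod]
  exact ((integrable_indicator_iff measurableSet_ball).2
    (integrableOn_const measure_ball_lt_top.ne)).mul_prod hf

theorem integral_abs_slabExtension (hh : 0 ≤ h) :
    ∫ y, |slabExtension f h y| = 2 * h * ∫ x, |f x| := by
  have habs : ∀ p : ℝ × (Fin d → ℝ), |(ball (0 : ℝ) h).indicator 1 p.1 * f p.2| =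
      (ball (0 : ℝ) h).indicator 1 p.1 * |f p.2| := fun p => by
    rw [abs_mul, abs_of_nonneg (indicator_nonneg (by simp) _)]
  rw [slabExtension_eq_comp]
  refine ((volume_preserving_piFinSuccAbove (fun _ : Fin (d + 1) => ℝ) 0).integral_comp'
    (fun p => |(ball (0 : ℝ) h).indicator 1 p.1 * f p.2|)).trans ?_
  rw [Measure.volume_eq_prod]
  simp_rw [habs]
  rw [integral_prod_mul ((ball (0 : ℝ) h).indicator 1) fun x => |f x|,
    integral_indicator_one measurableSet_ball, Real.volume_real_ball hh]

theorem setLAverage_ball_slabExtension (hf : AEMeasurable f) {y : Fin (d + 1) → ℝ} {s : ℝ}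
    (hs : 0 < s) (hsub : ball (y 0) s ⊆ ball 0 h) :
    ⨍⁻ z in ball y s, ENNReal.ofReal |slabExtension f h z| ∂volume =
      ⨍⁻ x in ball (Fin.tail y) s, ENNReal.ofReal |f x| ∂volume := by
  have hball := ball_eq_preimage_piFinSuccAbove 0 y hs
  rw [Fin.removeNth_zero] at hball
  have heq : EqOn (fun z => ENNReal.ofReal |slabExtension f h z|)
      (fun z => ENNReal.ofReal |f (e z).2|) (ball y s) := by
    intro z hz
    rw [hball] at hz
    simp only [slabExtension_eq_comp, Function.comp_apply, indicator_of_mem (hsub hz.1),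
      Pi.one_apply, one_mul]
  rw [setLAverage_congr_fun measurableSet_ball heq, hball]
  refine ((volume_preserving_piFinSuccAbove (fun _ : Fin (d + 1) => ℝ) 0).setLAverage_comp_preimage
    (fun p => ENNReal.ofReal |f p.2|) _).trans ?_
  rw [Measure.volume_eq_prod]
  exact setLAverage_prod_snd (by simp [hs]) measure_ball_lt_top.ne hf.abs.ennreal_ofReal.restrict

end SlabExtension

def IsWeakTypeConst (d : ℕ) (B : Set (Fin d → ℝ)) (c : ℝ) : Prop :=
  ∀ f : (Fin d → ℝ) → ℝ, Integrable f volume → ∀ α : ℝ, 0 < α →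
    ENNReal.ofReal α * volume {x | ENNReal.ofReal α < maxOp d B f x} ≤
      ENNReal.ofReal (c * ∫ x, |f x|)

theorem isWeakTypeConst_unitCube (d : ℕ) : IsWeakTypeConst d (unitCube d) (4 ^ d) := by
  intro f hf α hα
  rw [setOf_lt_maxOp_unitCube, ENNReal.ofReal_mul (by positivity), ENNReal.ofReal_pow (by norm_num),
    ENNReal.ofReal_ofNat,
    ofReal_integral_eq_lintegral_ofReal hf.abs (ae_of_all _ fun x => abs_nonneg (f x))]
  refine mul_measure_setOf_exists_pos_le _ _ fun n => ?_
  simpa using mul_measure_setOf_lt_setLAverage_ball_le volume (fun y => ENNReal.ofReal |f y|)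
    (ENNReal.ofReal α) n

theorem IsWeakTypeConst.mul_volume_setOf_lt_setLAverage_ball_le {d : ℕ} {c : ℝ}
    (hc : IsWeakTypeConst (d + 1) (unitCube (d + 1)) c) (hc₀ : 0 ≤ c) {f : (Fin d → ℝ) → ℝ}
    (hf : Integrable f) {α : ℝ} (hα : 0 < α) {R : ℝ} (hR : 0 ≤ R) :
    ENNReal.ofReal α * volume {x | ∃ s ∈ Ioc 0 R,
      ENNReal.ofReal α < ⨍⁻ y in ball x s, ENNReal.ofReal |f y| ∂volume} ≤
        ENNReal.ofReal (c * ∫ x, |f x|) := by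
  set A := {x | ∃ s ∈ Ioc 0 R,
    ENNReal.ofReal α < ⨍⁻ y in ball x s, ENNReal.ofReal |f y| ∂volume}
  have he := volume_preserving_piFinSuccAbove (fun _ : Fin (d + 1) => ℝ) 0
  refine ENNReal.le_ofReal_of_forall_pos_mul_le (k := 2 * R) (by positivity) (by positivity)
    fun t ht => ?_
  set g := slabExtension f (R + t / 2)
  set S := MeasurableEquiv.piFinSuccAbove (fun _ : Fin (d + 1) => ℝ) 0 ⁻¹' (ball 0 (t / 2) ×ˢ A)
  have hS : volume S = ENNReal.ofReal t * volume A := by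
    rw [he.measure_preimage_equiv, Measure.volume_eq_prod, Measure.prod_prod, Real.volume_ball,
      mul_div_cancel₀ t two_ne_zero]
  have hsub : S ⊆ {y | ENNReal.ofReal α < maxOp (d + 1) (unitCube (d + 1)) g y} := by
    rw [setOf_lt_maxOp_unitCube]
    rintro y ⟨hy₀, s, hs, hlt⟩
    simp only [MeasurableEquiv.piFinSuccAbove_apply, Fin.insertNthEquiv_symm_apply,
      Fin.removeNth_zero, mem_ball, dist_zero_right] at hy₀ hlt
    refine ⟨s, hs.1, ?_⟩
    rwa [setLAverage_ball_slabExtension hf.aemeasurable hs.1 (ball_subset_ball' ?_)]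
    rw [dist_zero_right]
    linarith [hs.2]
  calc ENNReal.ofReal α * volume A * ENNReal.ofReal t
      = ENNReal.ofReal α * volume S := by rw [hS, mul_assoc, mul_comm (volume A)]
    _ ≤ ENNReal.ofReal α *
          volume {y | ENNReal.ofReal α < maxOp (d + 1) (unitCube (d + 1)) g y} := by
        gcongr
    _ ≤ ENNReal.ofReal (c * ∫ y, |g y|) := hc g (integrable_slabExtension hf _) α hα
    _ = ENNReal.ofReal ((c * ∫ x, |f x|) * (t + 2 * R)) := by
        rw [integral_abs_slabExtension (by positivity)]
        ring_nf

theorem IsWeakTypeConst.of_succ {d : ℕ} {c : ℝ}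
    (hc : IsWeakTypeConst (d + 1) (unitCube (d + 1)) c) (hc₀ : 0 ≤ c) :
    IsWeakTypeConst d (unitCube d) c := by
  intro f hf α hα
  rw [setOf_lt_maxOp_unitCube]
  exact mul_measure_setOf_exists_pos_le _ _ fun n =>
    hc.mul_volume_setOf_lt_setLAverage_ball_le hc₀ hf hα n.cast_nonneg

theorem bestConst_cube_mono_general (d : ℕ) :
    bestConst d (unitCube d) ≤ bestConst (d + 1) (unitCube (d + 1)) :=
  csInf_le_csInf ⟨0, fun _ hc => hc.1.le⟩ ⟨4 ^ (d + 1), by positivity, isWeakTypeConst_unitCube _⟩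
    fun _ hc => ⟨hc.1, IsWeakTypeConst.of_succ hc.2 hc.1.le⟩

/-- With `c_d` the best constant in the weak type `(1,1)` inequality for
the centered Hardy–Littlewood maximal operator associated to the open unit cube
`Q_d = (-1/2,1/2)^d`, one has `c_d ≤ c_{d+1}` for every `d ≥ 1`. -/
theorem bestConst_cube_mono (d : ℕ) (hd : 1 ≤ d) :
    bestConst d (unitCube d) ≤ bestConst (d + 1) (unitCube (d + 1)) :=
  bestConst_cube_mono_general d
end

section
/- Let Q_d = (−1/2,1/2)^d be the open unit cube in ℝ^d, let μ be a nonzero finite nonnegative Borel measure on ℝ^d with total mass k = μ(ℝ^d), let α > 0, and set L := (k/α)^{1/d}. Then: (a) for every x ∈ ℝ^d and every r ≥ L, μ(x + rQ_d)/r^d ≤ α, so any radius r witnessing M_{d,Q_d}μ(x) > α satisfies r < L; and (b) for every N > L, {x ∈ ℝ^d : M_{d,Q_d} μ(x) > α} × [−N + L, N − L] ⊆ {z ∈ ℝ^{d+1} : M_{d+1,Q_{d+1}} (μ × λ_{[−N,N]})(z) > α}, where μ × λ_{[−N,N]} is the product of μ with the restriction of one-dimensional Lebesgue measure to [−N, N].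 -/
open MeasureTheory Set
open scoped ENNReal

/-- The centered Hardy–Littlewood maximal function of a measure `μ` on `ℝ^d` associated to
the unit cube: `M_{d,Q_d} μ (x) = sup_{r>0} μ(x + rQ_d)/r^d` (the cube has volume `1`). -/
noncomputable def cubeMaxOp (d : ℕ) (μ : Measure (Fin d → ℝ)) (x : Fin d → ℝ) : ℝ≥0∞ :=
  ⨆ (r : ℝ) (_ : 0 < r),
    μ ((fun b => x + r • b) '' unitCube d) / ENNReal.ofReal (r ^ d)

noncomputable def cubeAverage (d : ℕ) (μ : Measure (Fin d → ℝ)) (x : Fin d → ℝ) (r : ℝ) :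
    ℝ≥0∞ :=
  μ ((fun b => x + r • b) '' unitCube d) / ENNReal.ofReal (r ^ d)

section MaximalFunction

variable {d : ℕ} {μ : Measure (Fin d → ℝ)} {x : Fin d → ℝ}

lemma cubeAverage_le_cubeMaxOp {r : ℝ} (hr : 0 < r) : cubeAverage d μ x r ≤ cubeMaxOp d μ x :=
  le_iSup₂ (f := fun r (_ : 0 < r) => cubeAverage d μ x r) r hr

lemma exists_lt_cubeAverage_of_lt_cubeMaxOp {a : ℝ≥0∞} (h : a < cubeMaxOp d μ x) :
    ∃ r, 0 < r ∧ a < cubeAverage d μ x r := by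
  simpa only [cubeMaxOp, cubeAverage, lt_iSup_iff, exists_prop] using h

lemma cubeAverage_le_of_measure_univ_div_le [IsFiniteMeasure μ] {α r : ℝ} (hα : 0 < α)
    (hr : (μ univ).toReal / α ≤ r ^ d) : cubeAverage d μ x r ≤ ENNReal.ofReal α := by
  refine ENNReal.div_le_of_le_mul ?_
  calc μ ((fun b => x + r • b) '' unitCube d) ≤ μ univ := measure_mono (subset_univ _)
    _ = ENNReal.ofReal (μ univ).toReal := (ENNReal.ofReal_toReal (measure_ne_top μ _)).symm
    _ ≤ ENNReal.ofReal (α * r ^ d) := ENNReal.ofReal_le_ofReal ((div_le_iff₀' hα).1 hr)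
    _ = ENNReal.ofReal α * ENNReal.ofReal (r ^ d) := ENNReal.ofReal_mul hα.le

end MaximalFunction

lemma image_add_smul_unitCube {n : ℕ} (z : Fin n → ℝ) {r : ℝ} (hr : 0 < r) :
    (fun b => z + r • b) '' unitCube n = univ.pi fun i => Ioo (z i - r / 2) (z i + r / 2) := by
  ext y
  simp only [unitCube, mem_image, mem_univ_pi, mem_Ioo]
  constructor
  · rintro ⟨b, hb, rfl⟩ i
    simp only [Pi.add_apply, Pi.smul_apply, smul_eq_mul]
    constructor <;> nlinarith [hb i]
  · intro hy
    refine ⟨fun i => (y i - z i) / r, fun i => ⟨?_, ?_⟩, ?_⟩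
    · rw [lt_div_iff₀ hr]; linarith [hy i]
    · rw [div_lt_iff₀ hr]; linarith [hy i]
    · ext i
      simp only [Pi.add_apply, Pi.smul_apply, smul_eq_mul]
      field_simp
      ring

section Snoc

variable {d : ℕ}

lemma preimage_snoc_image_unitCube (x : Fin d → ℝ) (t : ℝ) {r : ℝ} (hr : 0 < r) :
    (fun p : (Fin d → ℝ) × ℝ => (Fin.snoc p.1 p.2 : Fin (d + 1) → ℝ)) ⁻¹'
        ((fun b => Fin.snoc x t + r • b) '' unitCube (d + 1)) =
      ((fun b => x + r • b) '' unitCube d) ×ˢ Ioo (t - r / 2) (t + r / 2) := by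
  ext ⟨y, s⟩
  simp only [image_add_smul_unitCube _ hr, mem_preimage, mem_univ_pi, mem_prod,
    Fin.forall_fin_succ', Fin.snoc_castSucc, Fin.snoc_last]

lemma map_snoc_prod_image_unitCube (μ : Measure (Fin d → ℝ)) (ν : Measure ℝ) [SFinite ν]
    (x : Fin d → ℝ) (t : ℝ) {r : ℝ} (hr : 0 < r) :
    (μ.prod ν).map (fun p : (Fin d → ℝ) × ℝ => Fin.snoc p.1 p.2)
        ((fun b => Fin.snoc x t + r • b) '' unitCube (d + 1)) =
      μ ((fun b => x + r • b) '' unitCube d) * ν (Ioo (t - r / 2) (t + r / 2)) := by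
  have hmeas : MeasurableSet ((fun b => Fin.snoc x t + r • b) '' unitCube (d + 1)) := by
    rw [image_add_smul_unitCube _ hr]
    exact MeasurableSet.univ_pi fun _ => measurableSet_Ioo
  rw [Measure.map_apply (by fun_prop) hmeas, preimage_snoc_image_unitCube x t hr,
    Measure.prod_prod]

lemma cubeAverage_map_snoc_prod_restrict (μ : Measure (Fin d → ℝ)) (s : Set ℝ)
    (x : Fin d → ℝ) (t : ℝ) {r : ℝ} (hr : 0 < r) (hs : Ioo (t - r / 2) (t + r / 2) ⊆ s) :
    cubeAverage (d + 1) ((μ.prod (volume.restrict s)).map fun p => Fin.snoc p.1 p.2)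
        (Fin.snoc x t) r =
      cubeAverage d μ x r := by
  have hlen : volume.restrict s (Ioo (t - r / 2) (t + r / 2)) = ENNReal.ofReal r := by
    rw [Measure.restrict_apply measurableSet_Ioo, inter_eq_self_of_subset_left hs,
      Real.volume_Ioo]
    ring_nf
  rw [cubeAverage, map_snoc_prod_image_unitCube _ _ x t hr, hlen, pow_succ,
    ENNReal.ofReal_mul (by positivity)]
  exact ENNReal.mul_div_mul_right _ _ (by simpa using hr) ENNReal.ofReal_ne_top

end Snoc

theorem cube_maximal_dimension_lift_general (d : ℕ) (hd : 0 < d)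
    (μ : Measure (Fin d → ℝ)) [IsFiniteMeasure μ]
    (α : ℝ) (hα : 0 < α) (k L : ℝ)
    (hk : k = (μ Set.univ).toReal)
    (hL : L = (k / α) ^ ((1 : ℝ) / d)) :
    (∀ (x : Fin d → ℝ) (r : ℝ), L ≤ r →
      μ ((fun b => x + r • b) '' unitCube d) / ENNReal.ofReal (r ^ d) ≤
        ENNReal.ofReal α) ∧
    (∀ N : ℝ, L < N → ∀ (x : Fin d → ℝ) (t : ℝ),
      ENNReal.ofReal α < cubeMaxOp d μ x → t ∈ Set.Icc (-N + L) (N - L) →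
      ENNReal.ofReal α <
        cubeMaxOp (d + 1)
          ((μ.prod (volume.restrict (Set.Icc (-N) N))).map
            (fun p : (Fin d → ℝ) × ℝ => Fin.snoc p.1 p.2))
          (Fin.snoc x t)) := by
  have hkα : 0 ≤ k / α := div_nonneg (hk ▸ ENNReal.toReal_nonneg) hα.le
  have hL0 : 0 ≤ L := hL ▸ Real.rpow_nonneg hkα _
  have hLd : L ^ d = k / α := by
    rw [hL, one_div, Real.rpow_inv_natCast_pow hkα hd.ne']
  have part_a : ∀ x r, L ≤ r → cubeAverage d μ x r ≤ ENNReal.ofReal α := fun x r hr =>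
    cubeAverage_le_of_measure_univ_div_le hα (hk ▸ hLd ▸ pow_le_pow_left₀ hL0 hr d)
  refine ⟨part_a, fun N _ x t hx ht => ?_⟩
  obtain ⟨r, hr, hαr⟩ := exists_lt_cubeAverage_of_lt_cubeMaxOp hx
  have hrL : r < L := lt_of_not_ge fun h => (part_a x r h).not_gt hαr
  have hsub : Ioo (t - r / 2) (t + r / 2) ⊆ Icc (-N) N := fun s hs =>
    ⟨by linarith [hs.1, ht.1], by linarith [hs.2, ht.2]⟩
  calc ENNReal.ofReal α < cubeAverage d μ x r := hαr
    _ = cubeAverage (d + 1) _ (Fin.snoc x t) r :=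
      (cubeAverage_map_snoc_prod_restrict μ _ x t hr hsub).symm
    _ ≤ _ := cubeAverage_le_cubeMaxOp hr

/-- Let `Q_d = (-1/2,1/2)^d`, let `μ` be a nonzero finite nonnegative Borel
measure on `ℝ^d` with total mass `k = μ(ℝ^d)`, let `α > 0`, and set `L = (k/α)^(1/d)`. Then:
(a) for every `x ∈ ℝ^d` and every `r ≥ L`, `μ(x + rQ_d)/r^d ≤ α`; and
(b) for every `N > L`,
`{M_{d,Q_d} μ > α} × [-N+L, N-L] ⊆ {M_{d+1,Q_{d+1}} (μ × λ_{[-N,N]}) > α}`,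
where `μ × λ_{[-N,N]}` is the product of `μ` with the restriction of one-dimensional Lebesgue
measure to `[-N,N]`, a point `(x, t)` of `ℝ^d × ℝ` being identified with the point
`Fin.snoc x t` of `ℝ^{d+1}`. -/
theorem cube_maximal_dimension_lift (d : ℕ) (hd : 0 < d)
    (μ : Measure (Fin d → ℝ)) [IsFiniteMeasure μ] (hμ : μ ≠ 0)
    (α : ℝ) (hα : 0 < α) (k L : ℝ)
    (hk : k = (μ Set.univ).toReal)
    (hL : L = (k / α) ^ ((1 : ℝ) / d)) :
    (∀ (x : Fin d → ℝ) (r : ℝ), L ≤ r →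
      μ ((fun b => x + r • b) '' unitCube d) / ENNReal.ofReal (r ^ d) ≤
        ENNReal.ofReal α) ∧
    (∀ N : ℝ, L < N → ∀ (x : Fin d → ℝ) (t : ℝ),
      ENNReal.ofReal α < cubeMaxOp d μ x → t ∈ Set.Icc (-N + L) (N - L) →
      ENNReal.ofReal α <
        cubeMaxOp (d + 1)
          ((μ.prod (volume.restrict (Set.Icc (-N) N))).map
            (fun p : (Fin d → ℝ) × ℝ => Fin.snoc p.1 p.2))
          (Fin.snoc x t)) :=
  cube_maximal_dimension_lift_general d hd μ α hα k L hk hL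
end
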